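/- Let x ∈ ℝ^d, M ∈ ℝ^{m×d}, and y = Mx + w with ‖w‖₂ ≤ η. Suppose inf{‖Mv‖₂ : v ∈ T(x), ‖v‖₂ = 1} ≥ τ for some τ > 0, where T(x) = cone{z − x : ‖Ωz‖₁ ≤ ‖Ωx‖₁}. Then any minimizer x̂ of ‖Ωz‖₁ subject to ‖Mz − y‖₂ ≤ η satisfies ‖x − x̂‖₂ ≤ 2η/τ. -/
import Mathlib


noncomputable section

def l1 {n : ℕ} (v : Fin n → ℝ) : ℝ := ∑ i, |v i|

def l2 {n : ℕ} (v : Fin n → ℝ) : ℝ := Real.sqrt (∑ i, (v i) ^ 2)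

def mulVec' {m d : ℕ} (M : Fin m → Fin d → ℝ) (x : Fin d → ℝ) : Fin m → ℝ :=
  fun i => ∑ j, M i j * x j

def coneHull {d : ℕ} (S : Set (Fin d → ℝ)) : Set (Fin d → ℝ) :=
  {v | ∃ (k : ℕ) (t : Fin k → ℝ) (z : Fin k → (Fin d → ℝ)),
    (∀ i, 0 ≤ t i) ∧ (∀ i, z i ∈ S) ∧ v = ∑ i, t i • z i}

def tangentCone {p d : ℕ} (Ω : Fin p → Fin d → ℝ) (x : Fin d → ℝ) : Set (Fin d → ℝ) :=
  coneHull {w | ∃ z : Fin d → ℝ, l1 (mulVec' Ω z) ≤ l1 (mulVec' Ω x) ∧ w = z - x}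

lemma l2_eq {n : ℕ} (v : Fin n → ℝ) :
    l2 v = ‖(WithLp.equiv 2 (Fin n → ℝ)).symm v‖ := by
  rw [EuclideanSpace.norm_eq]
  simp [l2, Real.norm_eq_abs, sq_abs]

lemma l2_nonneg {n : ℕ} (v : Fin n → ℝ) : 0 ≤ l2 v := Real.sqrt_nonneg _

lemma l2_smul {n : ℕ} (c : ℝ) (v : Fin n → ℝ) : l2 (c • v) = |c| * l2 v := by
  unfold l2
  have : ∑ i, ((c • v) i) ^ 2 = c ^ 2 * ∑ i, (v i) ^ 2 := by
    rw [Finset.mul_sum]; congr 1; ext i; simp [Pi.smul_apply, smul_eq_mul]; ring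
  rw [this, Real.sqrt_mul (sq_nonneg c), Real.sqrt_sq_eq_abs]

lemma l2_neg {n : ℕ} (v : Fin n → ℝ) : l2 (-v) = l2 v := by
  unfold l2; congr 1; apply Finset.sum_congr rfl; intro i _; simp

lemma l2_add_le {n : ℕ} (a b : Fin n → ℝ) : l2 (a + b) ≤ l2 a + l2 b := by
  simp only [l2_eq]
  rw [show (WithLp.equiv 2 (Fin n → ℝ)).symm (a + b)
      = (WithLp.equiv 2 (Fin n → ℝ)).symm a + (WithLp.equiv 2 (Fin n → ℝ)).symm b from rfl]
  exact norm_add_le _ _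

lemma l2_eq_zero_iff {n : ℕ} (v : Fin n → ℝ) : l2 v = 0 ↔ v = 0 := by
  rw [l2_eq, norm_eq_zero]
  exact ⟨fun h => congrArg (WithLp.equiv 2 (Fin n → ℝ)) h, fun h => by subst h; rfl⟩

lemma mulVec'_smul {m d : ℕ} (M : Fin m → Fin d → ℝ) (c : ℝ) (v : Fin d → ℝ) :
    mulVec' M (c • v) = c • mulVec' M v := by
  funext i
  simp only [mulVec', Pi.smul_apply, smul_eq_mul, Finset.mul_sum]
  exact Finset.sum_congr rfl (fun j _ => by ring)

lemma mulVec'_sub {m d : ℕ} (M : Fin m → Fin d → ℝ) (a b : Fin d → ℝ) :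
    mulVec' M (a - b) = mulVec' M a - mulVec' M b := by
  funext i
  simp only [mulVec', Pi.sub_apply, ← Finset.sum_sub_distrib]
  exact Finset.sum_congr rfl (fun j _ => by ring)

theorem recovery_via_tangent_cones_noise {m d p : ℕ}
    (M : Fin m → Fin d → ℝ) (Ω : Fin p → Fin d → ℝ)
    (x xhat : Fin d → ℝ) (w y : Fin m → ℝ) (η τ : ℝ)
    (hy : y = mulVec' M x + w) (hw : l2 w ≤ η) (hτ : 0 < τ)
    (hinf : ∀ v ∈ tangentCone Ω x, l2 v = 1 → τ ≤ l2 (mulVec' M v))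
    (hfeas : l2 (mulVec' M xhat - y) ≤ η)
    (hmin : ∀ z : Fin d → ℝ, l2 (mulVec' M z - y) ≤ η →
      l1 (mulVec' Ω xhat) ≤ l1 (mulVec' Ω z)) :
    l2 (x - xhat) ≤ 2 * η / τ := by
  have hη : 0 ≤ η := le_trans (l2_nonneg w) hw
  -- x is feasible
  have hxfeas : l2 (mulVec' M x - y) ≤ η := by
    have : mulVec' M x - y = -w := by rw [hy]; abel
    rw [this, l2_neg]; exact hw
  have hopt : l1 (mulVec' Ω xhat) ≤ l1 (mulVec' Ω x) := hmin x hxfeas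
  set v := xhat - x with hv
  have hMv : l2 (mulVec' M v) ≤ 2 * η := by
    have h1 : mulVec' M v = (mulVec' M xhat - y) + (y - mulVec' M x) := by
      rw [hv, mulVec'_sub]; abel
    have h2 : y - mulVec' M x = w := by rw [hy]; abel
    calc l2 (mulVec' M v) ≤ l2 (mulVec' M xhat - y) + l2 (y - mulVec' M x) := by
          rw [h1]; exact l2_add_le _ _
      _ ≤ η + η := by rw [h2]; exact add_le_add hfeas hw
      _ = 2 * η := by ring
  have hgoal : l2 v ≤ 2 * η / τ := by
    rcases eq_or_ne (l2 v) 0 with h0 | h0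
    · rw [h0]; positivity
    · have hpos : 0 < l2 v := lt_of_le_of_ne (l2_nonneg v) (Ne.symm h0)
      set c := (l2 v)⁻¹ with hc
      have hcpos : 0 < c := inv_pos.mpr hpos
      have hmem : c • v ∈ tangentCone Ω x := by
        refine ⟨1, fun _ => c, fun _ => v, fun _ => le_of_lt hcpos,
          fun _ => ⟨xhat, hopt, rfl⟩, ?_⟩
        simp
      have hnorm : l2 (c • v) = 1 := by
        rw [l2_smul, abs_of_pos hcpos, hc, inv_mul_cancel₀ h0]
      have hτle := hinf _ hmem hnorm
      rw [mulVec'_smul, l2_smul, abs_of_pos hcpos] at hτle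
      have : τ * l2 v ≤ l2 (mulVec' M v) := by
        rw [hc] at hτle
        calc τ * l2 v ≤ ((l2 v)⁻¹ * l2 (mulVec' M v)) * l2 v :=
              mul_le_mul_of_nonneg_right hτle (le_of_lt hpos)
          _ = l2 (mulVec' M v) := by field_simp
      rw [le_div_iff₀ hτ]
      calc l2 v * τ = τ * l2 v := by ring
        _ ≤ l2 (mulVec' M v) := this
        _ ≤ 2 * η := hMv
  have : x - xhat = -v := by rw [hv]; abel
  rw [this, l2_neg]; exact hgoal
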